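/- arXiv:2506.22031 — 7 statements merged into one kernel-verified Lean document; each statement's English description precedes it below -/
import Mathlib

section
/- Every element of the subgroup J can be written in the form τ' ∘ s_{g'} ∘ τ ∘ s_g for some g, g' ∈ G and some τ, τ' ∈ {id, σ}. -/
/-- The swap permutation `σ(z,w) = (w,z)` of `Z × Z`. -/
def sw (Z : Type*) : Equiv.Perm (Z × Z) := Equiv.prodComm Z Z

/-- The permutation `s_g(z,w) = (z, g • w)` of `Z × Z`. -/
def sMap {Z G : Type*} [Group G] [MulAction G Z] (g : G) : Equiv.Perm (Z × Z) :=
  Equiv.prodCongr (Equiv.refl Z) (MulAction.toPerm g)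

/-- The permutation `δ_g(z,w) = (g • z, g • w)` of `Z × Z`. -/
def dMap {Z G : Type*} [Group G] [MulAction G Z] (g : G) : Equiv.Perm (Z × Z) :=
  Equiv.prodCongr (MulAction.toPerm g) (MulAction.toPerm g)

/-- The subgroup `J` generated by `σ` and all `s_g`, `g ∈ G`. -/
def Jgrp (Z G : Type*) [Group G] [MulAction G Z] : Subgroup (Equiv.Perm (Z × Z)) :=
  Subgroup.closure ({sw Z} ∪ Set.range (sMap : G → Equiv.Perm (Z × Z)))

/-- The subgroup `H` generated by `σ` and all `δ_g`, `g ∈ G`. -/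
def Hgrp (Z G : Type*) [Group G] [MulAction G Z] : Subgroup (Equiv.Perm (Z × Z)) :=
  Subgroup.closure ({sw Z} ∪ Set.range (dMap : G → Equiv.Perm (Z × Z)))

lemma sw_mem_J (Z G : Type*) [Group G] [MulAction G Z] : sw Z ∈ Jgrp Z G :=
  Subgroup.subset_closure (Set.mem_union_left _ rfl)

lemma sMap_mem_J {Z G : Type*} [Group G] [MulAction G Z] (g : G) :
    sMap (Z := Z) g ∈ Jgrp Z G :=
  Subgroup.subset_closure (Set.mem_union_right _ ⟨g, rfl⟩)

/-- Auxiliary: the permutation `t_g(z,w) = (g • z, w)`. -/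
def tMap {Z G : Type*} [Group G] [MulAction G Z] (g : G) : Equiv.Perm (Z × Z) :=
  Equiv.prodCongr (MulAction.toPerm g) (Equiv.refl Z)

theorem stmt1 {Z G : Type*} [Group G] [MulAction G Z]
    (j : Equiv.Perm (Z × Z)) (hj : j ∈ Jgrp Z G) :
    ∃ (g g' : G) (τ τ' : Equiv.Perm (Z × Z)),
      (τ = 1 ∨ τ = sw Z) ∧ (τ' = 1 ∨ τ' = sw Z) ∧
      j = τ' * sMap g' * τ * sMap g := by
  have key : ∃ a b : G, j = tMap a * sMap b ∨ j = sw Z * (tMap a * sMap b) := by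
    refine Subgroup.closure_induction ?_ ?_ ?_ ?_ hj
    · rintro x (rfl | ⟨g, rfl⟩)
      · exact ⟨1, 1, Or.inr (by ext ⟨z, w⟩ <;> simp [sw, sMap, tMap])⟩
      · exact ⟨1, g, Or.inl (by ext ⟨z, w⟩ <;> simp [sMap, tMap])⟩
    · exact ⟨1, 1, Or.inl (by ext ⟨z, w⟩ <;> simp [sMap, tMap])⟩
    · rintro x y _ _ ⟨a, b, (rfl | rfl)⟩ ⟨c, d, (rfl | rfl)⟩
      · exact ⟨a * c, b * d, Or.inl (by ext ⟨z, w⟩ <;> simp [sMap, tMap, mul_smul])⟩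
      · exact ⟨b * c, a * d, Or.inr (by ext ⟨z, w⟩ <;> simp [sw, sMap, tMap, mul_smul])⟩
      · exact ⟨a * c, b * d, Or.inr (by ext ⟨z, w⟩ <;> simp [sw, sMap, tMap, mul_smul])⟩
      · exact ⟨b * c, a * d, Or.inl (by ext ⟨z, w⟩ <;> simp [sw, sMap, tMap, mul_smul])⟩
    · rintro x _ ⟨a, b, (rfl | rfl)⟩
      · refine ⟨a⁻¹, b⁻¹, Or.inl ?_⟩
        rw [eq_comm, eq_inv_iff_mul_eq_one]
        ext ⟨z, w⟩ <;> simp [sMap, tMap, mul_smul]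
      · refine ⟨b⁻¹, a⁻¹, Or.inr ?_⟩
        rw [eq_comm, eq_inv_iff_mul_eq_one]
        ext ⟨z, w⟩ <;> simp [sw, sMap, tMap, mul_smul]
  obtain ⟨a, b, (rfl | rfl)⟩ := key
  · exact ⟨b, a, sw Z, sw Z, Or.inr rfl, Or.inr rfl,
      by ext ⟨z, w⟩ <;> simp [sw, sMap, tMap]⟩
  · exact ⟨b, a, sw Z, 1, Or.inr rfl, Or.inl rfl,
      by ext ⟨z, w⟩ <;> simp [sw, sMap, tMap]⟩
end

section
/- Assume G is finite, Z has at least two elements, and the action of G on Z is free. Then the subgroup J is finite of cardinality 2·|G|². -/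
def fAux {Z G : Type*} [Group G] [MulAction G Z] (x : Bool × (G × G)) :
    Equiv.Perm (Z × Z) :=
  (if x.1 then sw Z else 1) * Equiv.prodCongr (MulAction.toPerm x.2.1) (MulAction.toPerm x.2.2)

lemma fAux_apply {Z G : Type*} [Group G] [MulAction G Z] (b : Bool) (g h : G) (z w : Z) :
    fAux (Z := Z) (b, (g, h)) (z, w) = if b then (h • w, g • z) else (g • z, h • w) := by
  cases b <;> simp [fAux, sw]

def Jexp (Z G : Type*) [Group G] [MulAction G Z] : Subgroup (Equiv.Perm (Z × Z)) where
  carrier := Set.range (fAux (Z := Z) (G := G))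
  one_mem' := ⟨(false, (1, 1)), by ext ⟨z, w⟩ <;> simp [fAux]⟩
  mul_mem' := by
    rintro _ _ ⟨⟨b, g, h⟩, rfl⟩ ⟨⟨c, g', h'⟩, rfl⟩
    refine ⟨(xor b c, if c then (h * g', g * h') else (g * g', h * h')), ?_⟩
    ext ⟨z, w⟩ <;> cases b <;> cases c <;> simp [fAux_apply, mul_smul]
  inv_mem' := by
    rintro _ ⟨⟨b, g, h⟩, rfl⟩
    refine ⟨(b, if b then (h⁻¹, g⁻¹) else (g⁻¹, h⁻¹)), eq_inv_of_mul_eq_one_left ?_⟩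
    ext ⟨z, w⟩ <;> cases b <;> simp [fAux_apply]

lemma Jgrp_eq_Jexp {Z G : Type*} [Group G] [MulAction G Z] :
    Jgrp Z G = Jexp Z G := by
  apply le_antisymm
  · rw [Jgrp, Subgroup.closure_le]
    rintro x (rfl | ⟨g, rfl⟩)
    · exact ⟨(true, (1, 1)), by ext ⟨z, w⟩ <;> simp [fAux, sw]⟩
    · exact ⟨(false, (1, g)), by ext ⟨z, w⟩ <;> simp [fAux_apply, sMap]⟩
  · rintro _ ⟨⟨b, g, h⟩, rfl⟩
    have hmem : fAux (Z := Z) (false, (g, h)) ∈ Jgrp Z G := by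
      have he : fAux (Z := Z) (false, (g, h)) = sw Z * sMap g * sw Z * sMap h := by
        ext ⟨z, w⟩ <;> simp [fAux_apply, sMap, sw]
      rw [he]
      exact mul_mem (mul_mem (mul_mem (sw_mem_J Z G) (sMap_mem_J g)) (sw_mem_J Z G)) (sMap_mem_J h)
    cases b
    · exact hmem
    · have he : fAux (Z := Z) (true, (g, h)) = sw Z * fAux (Z := Z) (false, (g, h)) := by
        ext ⟨z, w⟩ <;> simp [fAux_apply, sw]
      rw [he]
      exact mul_mem (sw_mem_J Z G) hmem

theorem stmt5 {Z G : Type*} [Group G] [MulAction G Z] [Finite G]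
    (hz : ∃ z w : Z, z ≠ w)
    (hfree : ∀ (g : G) (z : Z), g • z = z → g = 1) :
    Finite (Jgrp Z G) ∧ Nat.card (Jgrp Z G) = 2 * Nat.card G ^ 2 := by
  obtain ⟨z₀, w₀, hzw⟩ := hz
  have hcancel : ∀ (g g' : G) (z : Z), g • z = g' • z → g = g' := by
    intro g g' z h
    have h1 : (g'⁻¹ * g) • z = z := by rw [mul_smul, h, inv_smul_smul]
    have h2 := hfree _ _ h1
    rwa [inv_mul_eq_one, eq_comm] at h2
  have hinjf : Function.Injective (fAux (Z := Z) (G := G)) := by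
    rintro ⟨b, g, h⟩ ⟨b', g', h'⟩ heq
    have h1 := DFunLike.congr_fun heq (z₀, z₀)
    have h2 := DFunLike.congr_fun heq (z₀, w₀)
    rw [fAux_apply, fAux_apply] at h1 h2
    cases b <;> cases b' <;>
      simp only [if_true, Bool.false_eq_true, if_false, Prod.mk.injEq] at h1 h2
    · obtain ⟨e1, e2⟩ := h1
      simp [hcancel _ _ _ e1, hcancel _ _ _ e2]
    · exact absurd (MulAction.injective h' (h1.1.symm.trans h2.1)) hzw
    · exact absurd (MulAction.injective h (h1.1.trans h2.1.symm)) hzw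
    · obtain ⟨e1, e2⟩ := h1
      simp [hcancel _ _ _ e1, hcancel _ _ _ e2]
  have hJ : Jgrp Z G = Jexp Z G := Jgrp_eq_Jexp
  have hfin : Finite (Set.range (fAux (Z := Z) (G := G))) := (Set.finite_range _).to_subtype
  constructor
  · rw [hJ]; exact hfin
  · rw [hJ]
    have hc : Nat.card (Jexp Z G) = Nat.card (Bool × (G × G)) :=
      Nat.card_range_of_injective hinjf
    rw [hc, Nat.card_prod, Nat.card_prod, sq]
    congr 1
    simp [Nat.card_eq_fintype_card]
end

section
/- Assume G is finite, Z has at least two elements, and the action of G on Z is free. Then the subgroup H is finite of cardinality 2·|G|. -/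
section Aux
variable {Z G : Type*} [Group G] [MulAction G Z]

lemma dMap_apply (g : G) (p : Z × Z) : dMap g p = (g • p.1, g • p.2) := rfl

lemma sw_apply (p : Z × Z) : sw Z p = (p.2, p.1) := rfl

lemma dMap_mul (g h : G) : dMap (Z := Z) (g * h) = dMap g * dMap h := by
  ext p <;> simp [dMap_apply, mul_smul, Equiv.Perm.mul_apply]

lemma dMap_one : dMap (Z := Z) (1 : G) = 1 := by
  ext p <;> simp [dMap_apply]

lemma sw_comm (g : G) : sw Z * dMap g = dMap g * sw Z := by
  ext p <;> simp [dMap_apply, sw_apply, Equiv.Perm.mul_apply]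

lemma sw_sq : sw Z * sw Z = (1 : Equiv.Perm (Z × Z)) := by
  ext p <;> simp [sw_apply, Equiv.Perm.mul_apply]

lemma sw_inv : (sw Z)⁻¹ = sw Z := inv_eq_of_mul_eq_one_left sw_sq

lemma dMap_inv (g : G) : (dMap (Z := Z) g)⁻¹ = dMap g⁻¹ := by
  rw [inv_eq_iff_mul_eq_one, ← dMap_mul, mul_inv_cancel, dMap_one]

/-- The candidate carrier set for `Hgrp`. -/
def Hset (Z G : Type*) [Group G] [MulAction G Z] : Set (Equiv.Perm (Z × Z)) :=
  Set.range (dMap : G → Equiv.Perm (Z × Z)) ∪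
    (fun x => sw Z * x) '' Set.range (dMap : G → Equiv.Perm (Z × Z))

lemma hset_mul {a b : Equiv.Perm (Z × Z)} (ha : a ∈ Hset Z G) (hb : b ∈ Hset Z G) :
    a * b ∈ Hset Z G := by
  rcases ha with ⟨g, rfl⟩ | ⟨_, ⟨g, rfl⟩, rfl⟩ <;>
    rcases hb with ⟨h, rfl⟩ | ⟨_, ⟨h, rfl⟩, rfl⟩
  · exact Or.inl ⟨g * h, dMap_mul g h⟩
  · refine Or.inr ⟨dMap (g * h), ⟨g * h, rfl⟩, ?_⟩
    rw [dMap_mul, ← mul_assoc, ← sw_comm, mul_assoc]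
  · refine Or.inr ⟨dMap (g * h), ⟨g * h, rfl⟩, ?_⟩
    rw [dMap_mul, mul_assoc]
  · refine Or.inl ⟨g * h, ?_⟩
    rw [dMap_mul, ← mul_assoc, mul_assoc (sw Z) (dMap g) (sw Z), ← sw_comm,
      ← mul_assoc, sw_sq, one_mul]

lemma hset_inv {a : Equiv.Perm (Z × Z)} (ha : a ∈ Hset Z G) : a⁻¹ ∈ Hset Z G := by
  rcases ha with ⟨g, rfl⟩ | ⟨_, ⟨g, rfl⟩, rfl⟩
  · exact Or.inl ⟨g⁻¹, (dMap_inv g).symm⟩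
  · refine Or.inr ⟨dMap g⁻¹, ⟨g⁻¹, rfl⟩, ?_⟩
    show sw Z * dMap g⁻¹ = (sw Z * dMap g)⁻¹
    rw [mul_inv_rev, sw_inv, dMap_inv]
    exact sw_comm g⁻¹

/-- `Hset` as a subgroup. -/
def Hsub (Z G : Type*) [Group G] [MulAction G Z] : Subgroup (Equiv.Perm (Z × Z)) where
  carrier := Hset Z G
  one_mem' := Or.inl ⟨1, dMap_one⟩
  mul_mem' := hset_mul
  inv_mem' := hset_inv

lemma Hgrp_eq_Hsub : Hgrp Z G = Hsub Z G := by
  apply le_antisymm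
  · rw [Hgrp, Subgroup.closure_le]
    rintro x (rfl | ⟨g, rfl⟩)
    · exact Or.inr ⟨dMap 1, ⟨1, rfl⟩, by show sw Z * dMap (1 : G) = sw Z; rw [dMap_one, mul_one]⟩
    · exact Or.inl ⟨g, rfl⟩
  · rintro x (⟨g, rfl⟩ | ⟨_, ⟨g, rfl⟩, rfl⟩)
    · exact Subgroup.subset_closure (Or.inr ⟨g, rfl⟩)
    · exact mul_mem (Subgroup.subset_closure (Or.inl rfl))
        (Subgroup.subset_closure (Or.inr ⟨g, rfl⟩))

end Aux

theorem stmt10 {Z G : Type*} [Group G] [MulAction G Z] [Finite G]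
    (hz : ∃ z w : Z, z ≠ w)
    (hfree : ∀ (g : G) (z : Z), g • z = z → g = 1) :
    Finite (Hgrp Z G) ∧ Nat.card (Hgrp Z G) = 2 * Nat.card G := by
  obtain ⟨z, w, hzw⟩ := hz
  have hinj : Function.Injective (dMap : G → Equiv.Perm (Z × Z)) := by
    intro g h hgh
    have h1 : g • z = h • z := congrArg (fun e => (e (z, z)).1) hgh
    have h2 : (h⁻¹ * g) • z = z := by rw [mul_smul, h1, inv_smul_smul]
    exact (inv_mul_eq_one.mp (hfree _ _ h2)).symm
  have hdisj : Disjoint (Set.range (dMap : G → Equiv.Perm (Z × Z)))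
      ((fun x => sw Z * x) '' Set.range (dMap : G → Equiv.Perm (Z × Z))) := by
    rw [Set.disjoint_left]
    rintro x ⟨g, rfl⟩ ⟨_, ⟨h, rfl⟩, heq⟩
    have e1 : g • z = h • z := congrArg (fun e : Equiv.Perm (Z × Z) => (e (z, z)).1) heq.symm
    have e2 : g • z = h • w := by
      have := congrArg (fun e : Equiv.Perm (Z × Z) => (e (z, w)).1) heq.symm
      simpa [dMap_apply, sw_apply, Equiv.Perm.mul_apply] using this
    exact hzw (smul_left_cancel h (e1.symm.trans e2))
  have hfin1 : (Set.range (dMap : G → Equiv.Perm (Z × Z))).Finite := Set.finite_range _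
  have hfin2 : ((fun x => sw Z * x) ''
      Set.range (dMap : G → Equiv.Perm (Z × Z))).Finite := hfin1.image _
  have hcarrier : (Hgrp Z G : Set (Equiv.Perm (Z × Z))) = Hset Z G := by
    rw [Hgrp_eq_Hsub]; rfl
  have hfinH : (Hgrp Z G : Set (Equiv.Perm (Z × Z))).Finite := by
    rw [hcarrier]; exact hfin1.union hfin2
  refine ⟨hfinH.to_subtype, ?_⟩
  have hmulinj : Function.Injective (fun x => sw Z * x : Equiv.Perm (Z × Z) → _) :=
    mul_right_injective (sw Z)
  calc Nat.card (Hgrp Z G) = (Hset Z G).ncard := by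
        rw [← Nat.card_coe_set_eq]
        exact Nat.card_congr (Equiv.setCongr hcarrier)
    _ = (Set.range (dMap : G → Equiv.Perm (Z × Z))).ncard +
        ((fun x => sw Z * x) '' Set.range (dMap : G → Equiv.Perm (Z × Z))).ncard := by
        rw [Hset, Set.ncard_union_eq hdisj hfin1 hfin2]
    _ = Nat.card G + Nat.card G := by
        rw [Set.ncard_image_of_injective _ hmulinj, ← Nat.card_coe_set_eq,
          Nat.card_range_of_injective hinj]
    _ = 2 * Nat.card G := by ring
end

section
/- For every (z,w) ∈ Z × Z, the J-orbit of (z,w) equals the set {(g•z, h•w) | g, h ∈ G} ∪ {(h•w, g•z) | g, h ∈ G}. -/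
theorem stmt13 {Z G : Type*} [Group G] [MulAction G Z] (z w : Z) :
    {x : Z × Z | ∃ k ∈ Jgrp Z G, k (z, w) = x} =
      {x : Z × Z | ∃ g h : G, x = (g • z, h • w)} ∪
      {x : Z × Z | ∃ g h : G, x = (h • w, g • z)} := by
  set S : Set (Z × Z) :=
    {x : Z × Z | ∃ g h : G, x = (g • z, h • w)} ∪
      {x : Z × Z | ∃ g h : G, x = (h • w, g • z)} with hS
  have hswS : ∀ p ∈ S, sw Z p ∈ S := by
    rintro p (⟨g, h, rfl⟩ | ⟨g, h, rfl⟩)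
    · exact Or.inr ⟨g, h, rfl⟩
    · exact Or.inl ⟨g, h, rfl⟩
  have hsmS : ∀ (g : G), ∀ p ∈ S, sMap g p ∈ S := by
    rintro g p (⟨a, b, rfl⟩ | ⟨a, b, rfl⟩)
    · exact Or.inl ⟨a, g * b, by simp [sMap, mul_smul]⟩
    · exact Or.inr ⟨g * a, b, by simp [sMap, mul_smul]⟩
  have key : ∀ k ∈ Jgrp Z G, ∀ p : Z × Z, p ∈ S ↔ k p ∈ S := by
    intro k hk
    induction hk using Subgroup.closure_induction with
    | mem x hx =>
        rcases hx with hx | ⟨g, rfl⟩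
        · rw [Set.mem_singleton_iff] at hx
          subst hx
          intro p
          constructor
          · exact hswS p
          · intro hp
            have := hswS _ hp
            simpa [sw] using this
        · intro p
          constructor
          · exact hsmS g p
          · intro hp
            have h2 := hsmS g⁻¹ _ hp
            have h3 : sMap (Z := Z) g⁻¹ (sMap g p) = p := by
              cases p; simp [sMap, smul_smul]
            rwa [h3] at h2
    | one => intro p; simp
    | mul x y hx hy ihx ihy =>
        intro p
        rw [ihy p, ihx (y p)]
        simp [Equiv.Perm.mul_apply]
    | inv x hx ih =>
        intro p
        rw [ih (x⁻¹ p)]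
        simp
  ext p
  simp only [Set.mem_setOf_eq]
  constructor
  · rintro ⟨k, hk, rfl⟩
    rw [← key k hk]
    exact Or.inl ⟨1, 1, by simp⟩
  · intro hp
    rcases hp with ⟨g, h, rfl⟩ | ⟨g, h, rfl⟩
    · refine ⟨sMap h * sw Z * sMap g * sw Z, ?_, ?_⟩
      · exact mul_mem (mul_mem (mul_mem (sMap_mem_J h) (sw_mem_J Z G)) (sMap_mem_J g)) (sw_mem_J Z G)
      · simp [sMap, sw, Equiv.Perm.mul_apply]
    · refine ⟨sw Z * sMap h * sw Z * sMap g * sw Z, ?_, ?_⟩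
      · exact mul_mem (mul_mem (mul_mem (mul_mem (sw_mem_J Z G) (sMap_mem_J h)) (sw_mem_J Z G)) (sMap_mem_J g)) (sw_mem_J Z G)
      · simp [sMap, sw, Equiv.Perm.mul_apply]
end

section
/- Assume G is finite of order d and the action of G on Z is free. If z, w ∈ Z lie in different G-orbits (i.e. w ≠ g•z for every g ∈ G), then the J-orbit of (z,w) in Z × Z has exactly 2d² elements. -/
theorem stmt14 {Z G : Type*} [Group G] [MulAction G Z] [Finite G]
    (d : ℕ) (hd : Nat.card G = d)
    (hfree : ∀ (g : G) (z : Z), g • z = z → g = 1)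
    (z w : Z) (hzw : ∀ g : G, w ≠ g • z) :
    Nat.card {x : Z × Z | ∃ k ∈ Jgrp Z G, k (z, w) = x} = 2 * d ^ 2 := by
  classical
  set f1 : G × G → Z × Z := fun p => (p.1 • z, p.2 • w) with hf1
  set f2 : G × G → Z × Z := fun p => (p.1 • w, p.2 • z) with hf2
  set S : Set (Z × Z) := Set.range f1 ∪ Set.range f2 with hSdef
  -- stability of S under the generators
  have hsw : ∀ p ∈ S, sw Z p ∈ S := by
    rintro p (⟨⟨a, b⟩, rfl⟩ | ⟨⟨a, b⟩, rfl⟩)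
    · exact Or.inr ⟨(b, a), rfl⟩
    · exact Or.inl ⟨(b, a), rfl⟩
  have hsm : ∀ (g : G), ∀ p ∈ S, sMap (Z := Z) g p ∈ S := by
    rintro g p (⟨⟨a, b⟩, rfl⟩ | ⟨⟨a, b⟩, rfl⟩)
    · exact Or.inl ⟨(a, g * b), by simp [f1, sMap, mul_smul]⟩
    · exact Or.inr ⟨(a, g * b), by simp [f2, sMap, mul_smul]⟩
  have key : ∀ k ∈ Jgrp Z G, ⇑k '' S = S := by
    intro k hk
    induction hk using Subgroup.closure_induction with
    | mem x hx =>
      rcases hx with hx | ⟨g, rfl⟩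
      · rw [Set.mem_singleton_iff] at hx
        subst hx
        ext p
        constructor
        · rintro ⟨q, hq, rfl⟩; exact hsw q hq
        · intro hp
          exact ⟨sw Z p, hsw p hp, by simp [sw]⟩
      · ext p
        constructor
        · rintro ⟨q, hq, rfl⟩; exact hsm g q hq
        · intro hp
          refine ⟨sMap (Z := Z) g⁻¹ p, hsm g⁻¹ p hp, ?_⟩
          cases p; simp [sMap, smul_smul]
    | one => simp
    | mul a b _ _ iha ihb =>
      have : ⇑(a * b) '' S = ⇑a '' (⇑b '' S) := by
        rw [← Set.image_comp]; rfl
      rw [this, ihb, iha]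
    | inv a _ iha =>
      conv_lhs => rw [← iha]
      rw [← Set.image_comp]
      simp
  -- the orbit set is S
  have horb : {x : Z × Z | ∃ k ∈ Jgrp Z G, k (z, w) = x} = S := by
    ext x
    constructor
    · rintro ⟨k, hk, rfl⟩
      rw [← key k hk]
      exact ⟨(z, w), Or.inl ⟨(1, 1), by simp [f1]⟩, rfl⟩
    · rintro (⟨⟨g, h⟩, rfl⟩ | ⟨⟨g, h⟩, rfl⟩)
      · refine ⟨sMap (Z := Z) h * sw Z * sMap (Z := Z) g * sw Z, ?_, ?_⟩
        · exact mul_mem (mul_mem (mul_mem (sMap_mem_J h) (sw_mem_J Z G))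
            (sMap_mem_J g)) (sw_mem_J Z G)
        · simp [f1, sMap, sw, Equiv.Perm.mul_apply]
      · refine ⟨sMap (Z := Z) h * sw Z * sMap (Z := Z) g, ?_, ?_⟩
        · exact mul_mem (mul_mem (sMap_mem_J h) (sw_mem_J Z G)) (sMap_mem_J g)
        · simp [f2, sMap, sw, Equiv.Perm.mul_apply]
  rw [horb]
  -- injectivity
  have hinj : ∀ (a b : Z), Function.Injective (fun p : G × G => (p.1 • a, p.2 • b)) := by
    intro a b p q h
    simp only [Prod.mk.injEq] at h
    have h1 : (q.1⁻¹ * p.1) • a = a := by rw [mul_smul, h.1, inv_smul_smul]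
    have h2 : (q.2⁻¹ * p.2) • b = b := by rw [mul_smul, h.2, inv_smul_smul]
    have e1 := hfree _ _ h1
    have e2 := hfree _ _ h2
    exact Prod.ext (inv_mul_eq_one.mp e1).symm (inv_mul_eq_one.mp e2).symm
  -- disjointness
  have hdisj : Disjoint (Set.range f1) (Set.range f2) := by
    rw [Set.disjoint_left]
    rintro x ⟨⟨g, h⟩, rfl⟩ ⟨⟨g', h'⟩, hx⟩
    have h1 : g' • w = g • z := congrArg Prod.fst hx
    exact hzw (g'⁻¹ * g) (by rw [mul_smul, ← h1, inv_smul_smul])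
  rw [Nat.card_coe_set_eq, hSdef,
    Set.ncard_union_eq hdisj (Set.finite_range f1) (Set.finite_range f2),
    ← Nat.card_coe_set_eq, ← Nat.card_coe_set_eq,
    Nat.card_range_of_injective (hinj z w), Nat.card_range_of_injective (hinj w z),
    Nat.card_prod, hd]
  ring
end

section
/- Assume G is finite of order d and the action of G on Z is free. If z, w ∈ Z lie in the same G-orbit (i.e. w = c•z for some c ∈ G), then the J-orbit of (z,w) in Z × Z has exactly d² elements; in fact it equals the set {(a•z, b•z) | a, b ∈ G}. -/
theorem stmt15 {Z G : Type*} [Group G] [MulAction G Z] [Finite G]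
    (d : ℕ) (hd : Nat.card G = d)
    (hfree : ∀ (g : G) (z : Z), g • z = z → g = 1)
    (z w : Z) (c : G) (hw : w = c • z) :
    Nat.card {x : Z × Z | ∃ k ∈ Jgrp Z G, k (z, w) = x} = d ^ 2 ∧
    {x : Z × Z | ∃ k ∈ Jgrp Z G, k (z, w) = x} =
      {x : Z × Z | ∃ a b : G, x = (a • z, b • z)} := by
  subst hw
  set T : Set (Z × Z) := {x | ∃ a b : G, x = (a • z, b • z)} with hTdef
  have hgen : ∀ e ∈ ({sw Z} ∪ Set.range (sMap : G → Equiv.Perm (Z × Z))),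
      ⇑e '' T = T := by
    rintro e (rfl | ⟨g, rfl⟩)
    · ext x
      constructor
      · rintro ⟨y, ⟨a, b, rfl⟩, rfl⟩
        exact ⟨b, a, by simp [sw]⟩
      · rintro ⟨a, b, rfl⟩
        exact ⟨(b • z, a • z), ⟨b, a, rfl⟩, by simp [sw]⟩
    · ext x
      constructor
      · rintro ⟨y, ⟨a, b, rfl⟩, rfl⟩
        exact ⟨a, g * b, by simp [sMap, mul_smul]⟩
      · rintro ⟨a, b, rfl⟩
        refine ⟨(a • z, (g⁻¹ * b) • z), ⟨a, g⁻¹ * b, rfl⟩, ?_⟩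
        simp [sMap, mul_smul]
  have hOrb : ∀ k ∈ Jgrp Z G, ⇑k '' T = T := by
    intro k hk
    refine Subgroup.closure_induction hgen ?_ ?_ ?_ hk
    · simp
    · intro a b _ _ ha hb
      rw [Equiv.Perm.coe_mul, Set.image_comp, hb, ha]
    · intro a _ ha
      have := congrArg (fun s => ⇑a⁻¹ '' s) ha
      simpa [← Set.image_comp] using this.symm
  have hTz : ((z, c • z) : Z × Z) ∈ T := ⟨1, c, by simp⟩
  have hSeq : {x : Z × Z | ∃ k ∈ Jgrp Z G, k (z, c • z) = x} = T := by
    ext x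
    constructor
    · rintro ⟨k, hk, rfl⟩
      rw [← hOrb k hk]
      exact ⟨(z, c • z), hTz, rfl⟩
    · rintro ⟨a, b, rfl⟩
      refine ⟨sMap b * sw Z * sMap a * sMap c⁻¹, ?_, ?_⟩
      · exact mul_mem (mul_mem (mul_mem (sMap_mem_J b) (sw_mem_J Z G))
          (sMap_mem_J a)) (sMap_mem_J c⁻¹)
      · simp [sMap, sw, Equiv.Perm.mul_apply, mul_smul]
  refine ⟨?_, hSeq⟩
  rw [hSeq]
  have hf : Function.Injective (fun p : G × G => ((p.1 • z, p.2 • z) : Z × Z)) := by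
    rintro ⟨a, b⟩ ⟨a', b'⟩ h
    simp only [Prod.mk.injEq] at h
    have h1 : (a'⁻¹ * a) • z = z := by rw [mul_smul, h.1, inv_smul_smul]
    have h2 : (b'⁻¹ * b) • z = z := by rw [mul_smul, h.2, inv_smul_smul]
    have := hfree _ _ h1
    have := hfree _ _ h2
    ext <;> simp_all [inv_mul_eq_one]
  have hTr : T = Set.range (fun p : G × G => ((p.1 • z, p.2 • z) : Z × Z)) := by
    ext x
    constructor
    · rintro ⟨a, b, rfl⟩; exact ⟨(a, b), rfl⟩
    · rintro ⟨⟨a, b⟩, rfl⟩; exact ⟨a, b, rfl⟩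
  rw [hTr, Nat.card_range_of_injective hf, Nat.card_prod, hd, sq]
end

section
/- Assume the action of G on Z is free, and let z, w ∈ Z lie in different G-orbits (i.e. w ≠ k•z for every k ∈ G). If for g, h ∈ G the points (z, g•w) and (z, h•w) lie in the same H-orbit of Z × Z, then g = h. -/
theorem stmt17 {Z G : Type*} [Group G] [MulAction G Z]
    (hfree : ∀ (g : G) (z : Z), g • z = z → g = 1)
    (z w : Z) (hzw : ∀ k : G, w ≠ k • z)
    (g h : G)
    (horb : ∃ k ∈ Hgrp Z G, k (z, g • w) = (z, h • w)) :
    g = h := by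
  have key : ∀ k ∈ Hgrp Z G, ∃ a : G, k = dMap (Z := Z) a ∨ k = dMap (Z := Z) a * sw Z := by
    intro k hk
    induction hk using Subgroup.closure_induction with
    | mem x hx =>
      rcases hx with hx | ⟨a, rfl⟩
      · rw [Set.mem_singleton_iff] at hx
        subst hx
        exact ⟨1, Or.inr (by ext p <;> simp [dMap, sw])⟩
      · exact ⟨a, Or.inl rfl⟩
    | one => exact ⟨1, Or.inl (by ext p <;> simp [dMap])⟩
    | mul x y hx hy ihx ihy =>
      obtain ⟨a, ha⟩ := ihx
      obtain ⟨b, hb⟩ := ihy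
      rcases ha with rfl | rfl <;> rcases hb with rfl | rfl
      · exact ⟨a * b, Or.inl (by ext p <;> simp [dMap, mul_smul])⟩
      · exact ⟨a * b, Or.inr (by ext p <;> simp [dMap, sw, mul_smul])⟩
      · exact ⟨a * b, Or.inr (by ext p <;> simp [dMap, sw, mul_smul])⟩
      · exact ⟨a * b, Or.inl (by ext p <;> simp [dMap, sw, mul_smul])⟩
    | inv x hx ihx =>
      obtain ⟨a, ha⟩ := ihx
      rcases ha with rfl | rfl
      · exact ⟨a⁻¹, Or.inl (by rw [eq_comm, eq_inv_iff_mul_eq_one]; ext p <;> simp [dMap])⟩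
      · refine ⟨a⁻¹, Or.inr ?_⟩
        rw [eq_comm, eq_inv_iff_mul_eq_one]
        ext p <;> simp [dMap, sw]
  obtain ⟨k, hk, hkeq⟩ := horb
  obtain ⟨a, ha | ha⟩ := key k hk
  · subst ha
    simp only [dMap, Equiv.prodCongr_apply, Prod.map, MulAction.toPerm_apply, Prod.mk.injEq] at hkeq
    obtain ⟨h1, h2⟩ := hkeq
    have : a = 1 := hfree a z h1
    subst this
    simp only [one_smul] at h2
    have : (h⁻¹ * g) • w = w := by rw [mul_smul, h2, inv_smul_smul]
    have := hfree _ _ this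
    rw [← mul_left_cancel_iff (a := h⁻¹), inv_mul_cancel]
    exact this
  · subst ha
    simp only [dMap, sw, Equiv.Perm.mul_apply, Equiv.prodComm_apply, Prod.swap,
      Equiv.prodCongr_apply, Prod.map, MulAction.toPerm_apply, Prod.mk.injEq] at hkeq
    exact absurd hkeq.2 fun hc => hzw (h⁻¹ * a) (by rw [mul_smul, hc, inv_smul_smul])
end
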